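/- arXiv:2001.03439 — 8 statements merged into one kernel-verified Lean document; each statement's English description precedes it below -/
import Mathlib

section
/- Let P be a nonzero subring of a ring Q without zero-divisors. If an additive function a : P → Q satisfies both a(xy) = a(x)a(y) and a(xy) = a(x)y + x·a(y) for all x, y ∈ P, then a is identically zero. -/
/-!
Comparing the two expansions of `a (x * y)` gives `a x * a y = a x * y + x * a y`. Expanding
`a (x * x₀) * a z` in two ways with this identity yields `(x - a x) * x₀ * a z = 0`, so if `a`
does not vanish everywhere then `a` is the inclusion `P → Q`. But the inclusion is not a
derivation: `x₀ * x₀ = a (x₀ * x₀) = 2 * (x₀ * x₀)` forces `x₀ * x₀ = 0`.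
-/

section MulClosed

variable {Q S : Type*} [Ring Q] [SetLike S Q] [MulMemClass S Q] {P : S} {a : P → Q}

theorem mul_apply_eq_of_leibniz (hmul : ∀ x y : P, a (x * y) = a x * a y)
    (hleib : ∀ x y : P, a (x * y) = a x * y + x * a y) (x y : P) :
    a x * a y = a x * y + x * a y := by
  rw [← hmul, hleib]

theorem apply_eq_coe_of_leibniz [NoZeroDivisors Q] (hmul : ∀ x y : P, a (x * y) = a x * a y)
    (hleib : ∀ x y : P, a (x * y) = a x * y + x * a y) {x₀ z : P} (hx₀ : (x₀ : Q) ≠ 0)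
    (hz : a z ≠ 0) (x : P) : a x = x := by
  have hrel := mul_apply_eq_of_leibniz hmul hleib
  have expand_left : a x * a x₀ * a z = a x * a x₀ * z + x * x₀ * a z := by
    simpa only [hmul, MulMemClass.coe_mul] using hrel (x * x₀) z
  have expand_right : a x * a x₀ * a z = a x * a x₀ * z + a x * (x₀ * a z) := by
    rw [mul_assoc, hrel x₀ z, mul_add, ← mul_assoc]
  have hcancel : (x - a x) * x₀ * a z = 0 := by
    rw [sub_mul, sub_mul, add_left_cancel (expand_left.symm.trans expand_right), mul_assoc,
      sub_self]
  have hsub : (x : Q) - a x = 0 := by simpa [hx₀, hz] using hcancel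
  exact (sub_eq_zero.1 hsub).symm

theorem eq_zero_of_leibniz [NoZeroDivisors Q] (hP : ∃ x : P, (x : Q) ≠ 0)
    (hmul : ∀ x y : P, a (x * y) = a x * a y)
    (hleib : ∀ x y : P, a (x * y) = a x * y + x * a y) (x : P) : a x = 0 := by
  obtain ⟨x₀, hx₀⟩ := hP
  by_contra hx
  have hcoe := apply_eq_coe_of_leibniz hmul hleib hx₀ hx
  have hsq : (x₀ : Q) * x₀ = x₀ * x₀ + x₀ * x₀ := by
    simpa only [hcoe, MulMemClass.coe_mul] using hleib x₀ x₀
  exact hx₀ (mul_self_eq_zero.1 (left_eq_add.1 hsq))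

end MulClosed

theorem stmt_5_general (Q : Type*) [Ring Q] [NoZeroDivisors Q] (P : Subring Q)
    (hP : ∃ x : P, (x : Q) ≠ 0) (a : P → Q)
    (hmul : ∀ x y : P, a (x * y) = a x * a y)
    (hleib : ∀ x y : P, a (x * y) = a x * y + x * a y) :
    ∀ x : P, a x = 0 :=
  eq_zero_of_leibniz hP hmul hleib

theorem stmt_5 (Q : Type*) [Ring Q] [NoZeroDivisors Q] (P : Subring Q)
    (hP : ∃ x : P, (x : Q) ≠ 0) (a : P → Q)
    (hadd : ∀ x y : P, a (x + y) = a x + a y)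
    (hmul : ∀ x y : P, a (x * y) = a x * a y)
    (hleib : ∀ x y : P, a (x * y) = a x * y + x * a y) :
    ∀ x : P, a x = 0 :=
  stmt_5_general Q P hP a hmul hleib
end

section
/- Let 𝔽 be a subfield of a field 𝕂 and λ ∈ 𝕂 fixed. Functions f, k : 𝔽 → 𝕂 satisfy f(xy) = λ²xy + x·k(y) + k(x)·y for all x, y ∈ 𝔽 if and only if there exists a Leibniz function δ : 𝔽 → 𝕂 (i.e. δ(xy) = δ(x)y + x·δ(y)) such that k(x) = k(1)x + δ(x) and f(x) = (λ² + 2k(1))x + δ(x) for all x ∈ 𝔽. -/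
/-! Putting `x = 1` in the functional equation gives `f x = (c + k 1) * ι x + k x`; substituting this
back, the equation says exactly that `δ x := k x - k 1 * ι x` is a Leibniz function. -/

section Leibniz

variable {M K : Type*} [Monoid M] [CommRing K] (ι : M →* K)

def IsLeibniz (δ : M → K) : Prop :=
  ∀ x y, δ (x * y) = δ x * ι y + ι x * δ y

variable {ι} {c : K} {f k : M → K}

theorem isLeibniz_sub_mul_map_one
    (h : ∀ x y, f (x * y) = c * ι x * ι y + ι x * k y + k x * ι y) :
    IsLeibniz ι fun x => k x - k 1 * ι x := by
  intro x y
  have hxy := h x y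
  have h1xy := h 1 (x * y)
  simp only [one_mul, map_one, map_mul] at hxy h1xy ⊢
  linear_combination hxy - h1xy

theorem eq_mul_add_sub_of_functional_eq
    (h : ∀ x y, f (x * y) = c * ι x * ι y + ι x * k y + k x * ι y) (x : M) :
    f x = (c + 2 * k 1) * ι x + (k x - k 1 * ι x) := by
  have h1x := h 1 x
  rw [one_mul, map_one] at h1x
  linear_combination h1x

theorem functional_eq_of_isLeibniz {δ : M → K} (hδ : IsLeibniz ι δ)
    (hk : ∀ x, k x = k 1 * ι x + δ x) (hf : ∀ x, f x = (c + 2 * k 1) * ι x + δ x)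
    (x y : M) : f (x * y) = c * ι x * ι y + ι x * k y + k x * ι y := by
  rw [hf, hk x, hk y, hδ, map_mul]
  ring

end Leibniz

theorem stmt_7 (K : Type*) [Field K] (F : Subfield K) (lam : K) (f k : F → K) :
    (∀ x y : F, f (x * y) = lam ^ 2 * x * y + x * k y + k x * y) ↔
      ∃ δ : F → K, (∀ x y : F, δ (x * y) = δ x * y + x * δ y) ∧
        (∀ x : F, k x = k 1 * x + δ x) ∧
        ∀ x : F, f x = (lam ^ 2 + 2 * k 1) * x + δ x := by
  let ι : F →* K := F.subtype.toMonoidHom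
  constructor
  · intro h
    refine ⟨fun x => k x - k 1 * x, ?_, fun x => by ring, ?_⟩
    exacts [isLeibniz_sub_mul_map_one (ι := ι) h, eq_mul_add_sub_of_functional_eq (ι := ι) h]
  · rintro ⟨δ, hδ, hk, hf⟩
    exact functional_eq_of_isLeibniz (ι := ι) hδ hk hf
end

section
/- Let 𝔽 be a subfield of a field 𝕂 and λ ∈ 𝕂 fixed. Additive functions f, k : 𝔽 → 𝕂 satisfy f(xy) = λ²xy + x·k(y) + k(x)·y for all x, y ∈ 𝔽 if and only if there exists a derivation d : 𝔽 → 𝕂 (additive, satisfying the Leibniz rule) such that k(x) = k(1)x + d(x) and f(x) = (λ² + 2k(1))x + d(x) for all x ∈ 𝔽. -/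
/-!
Putting `y = 1` in the functional equation expresses `f` through `k`:
`f x = (λ² + k 1) x + k x`. Substituting this back, the equation says exactly that
`d x := k x - k 1 * x` satisfies the Leibniz rule, and `d` is additive because `k` is.
-/

section FunctionalEquation

variable {K S : Type*} [CommRing K] [SetLike S K] [SubringClass S K] {F : S} {c : K}
  {f k : F → K}

theorem apply_eq_of_functional_eq (h : ∀ x y : F, f (x * y) = c * x * y + x * k y + k x * y)
    (x : F) : f x = (c + k 1) * x + k x := by
  have hx1 := h x 1
  simp only [mul_one, OneMemClass.coe_one] at hx1
  rw [hx1]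
  ring

theorem leibniz_sub_mul_apply_one
    (h : ∀ x y : F, f (x * y) = c * x * y + x * k y + k x * y) (x y : F) :
    k (x * y) - k 1 * ↑(x * y) = (k x - k 1 * x) * y + x * (k y - k 1 * y) := by
  have hxy := h x y
  rw [apply_eq_of_functional_eq h] at hxy
  push_cast at hxy ⊢
  linear_combination hxy

theorem functional_eq_of_derivation {d : F → K}
    (hleib : ∀ x y : F, d (x * y) = d x * y + x * d y) (hk : ∀ x : F, k x = k 1 * x + d x)
    (hf : ∀ x : F, f x = (c + 2 * k 1) * x + d x) (x y : F) :
    f (x * y) = c * x * y + x * k y + k x * y := by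
  rw [hf, hk x, hk y, hleib]
  push_cast
  ring

end FunctionalEquation

theorem stmt_8_general (K : Type*) [Field K] (F : Subfield K) (lam : K) (f k : F → K)
    (hkadd : ∀ x y : F, k (x + y) = k x + k y) :
    (∀ x y : F, f (x * y) = lam ^ 2 * x * y + x * k y + k x * y) ↔
      ∃ d : F → K, (∀ x y : F, d (x + y) = d x + d y) ∧
        (∀ x y : F, d (x * y) = d x * y + x * d y) ∧
        (∀ x : F, k x = k 1 * x + d x) ∧
        ∀ x : F, f x = (lam ^ 2 + 2 * k 1) * x + d x := by
  constructor
  · intro h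
    refine ⟨fun x => k x - k 1 * x, fun x y => ?_, leibniz_sub_mul_apply_one h,
      fun x => by ring, fun x => ?_⟩
    · simp only [hkadd, Subfield.coe_add]
      ring
    · rw [apply_eq_of_functional_eq h]
      ring
  · rintro ⟨d, -, hleib, hk, hf⟩
    exact functional_eq_of_derivation hleib hk hf

theorem stmt_8 (K : Type*) [Field K] (F : Subfield K) (lam : K) (f k : F → K)
    (hfadd : ∀ x y : F, f (x + y) = f x + f y)
    (hkadd : ∀ x y : F, k (x + y) = k x + k y) :
    (∀ x y : F, f (x * y) = lam ^ 2 * x * y + x * k y + k x * y) ↔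
      ∃ d : F → K, (∀ x y : F, d (x + y) = d x + d y) ∧
        (∀ x y : F, d (x * y) = d x * y + x * d y) ∧
        (∀ x : F, k x = k 1 * x + d x) ∧
        ∀ x : F, f x = (lam ^ 2 + 2 * k 1) * x + d x :=
  stmt_8_general K F lam f k hkadd
end

section
/- Let 𝔽 be a subfield of a field 𝕂 and λ ∈ 𝕂 fixed. Functions f, h : 𝔽 → 𝕂 satisfy f(xy) = h(x)h(y) + 2λxy for all x, y ∈ 𝔽 if and only if there exists a multiplicative function m : 𝔽 → 𝕂 such that h(x) = h(1)·m(x) and f(x) = h(1)²·m(x) + 2λx for all x ∈ 𝔽. -/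
/-!
Subtracting the term `2λxy`, which depends on `x` and `y` only through `xy`, turns the equation into
`φ (xy) = h x h y` with `φ x = f x - 2λx`. Putting `y = 1` gives `φ = h(1)·h`, hence
`h(1)·h(xy) = h(x)·h(y)`: if `h(1) ≠ 0` then `m = h / h(1)` is multiplicative, and if `h(1) = 0` then
`h(x)² = φ(x²) = h(1)·h(x²) = 0`, so `h = 0` and `m = h / h(1) = 0` still works.
-/

section MulFactorization

variable {M K : Type*} [Monoid M] [Field K] {φ h : M → K}

theorem apply_eq_mul_apply_one (hφ : ∀ x y, φ (x * y) = h x * h y) (x : M) :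
    φ x = h x * h 1 := by
  simpa using hφ x 1

theorem apply_eq_zero_of_apply_one_eq_zero (hφ : ∀ x y, φ (x * y) = h x * h y) (h1 : h 1 = 0)
    (x : M) : h x = 0 :=
  mul_self_eq_zero.mp <| by rw [← hφ, apply_eq_mul_apply_one hφ, h1, mul_zero]

theorem apply_one_mul_div_apply_one (hφ : ∀ x y, φ (x * y) = h x * h y) (x : M) :
    h x = h 1 * (h x / h 1) := by
  by_cases h1 : h 1 = 0
  · simp [apply_eq_zero_of_apply_one_eq_zero hφ h1 x]
  · field_simp

theorem map_mul_eq_mul_iff :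
    (∀ x y, φ (x * y) = h x * h y) ↔
      ∃ m : M →ₙ* K, (∀ x, h x = h 1 * m x) ∧ ∀ x, φ x = h 1 ^ 2 * m x := by
  constructor
  · intro hφ
    have hh := apply_one_mul_div_apply_one hφ
    refine ⟨⟨fun x => h x / h 1, fun x y => ?_⟩, hh, fun x => ?_⟩
    · have hmul : h 1 * h (x * y) = h x * h y := by
        rw [mul_comm, ← apply_eq_mul_apply_one hφ, hφ]
      rcases eq_or_ne (h 1) 0 with h1 | h1
      · simp [h1]
      · rw [div_mul_div_comm, ← hmul, mul_div_mul_left _ _ h1]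
    · show φ x = h 1 ^ 2 * (h x / h 1)
      rw [apply_eq_mul_apply_one hφ]
      nth_rw 1 [hh x]
      ring
  · rintro ⟨m, hh, hφm⟩ x y
    rw [hφm, hh x, hh y, map_mul]
    ring

end MulFactorization

theorem stmt_9 (K : Type*) [Field K] (F : Subfield K) (lam : K) (f h : F → K) :
    (∀ x y : F, f (x * y) = h x * h y + 2 * lam * x * y) ↔
      ∃ m : F → K, (∀ x y : F, m (x * y) = m x * m y) ∧
        (∀ x : F, h x = h 1 * m x) ∧
        ∀ x : F, f x = h 1 ^ 2 * m x + 2 * lam * x := by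
  have hshift : (∀ x y : F, f (x * y) = h x * h y + 2 * lam * x * y) ↔
      ∀ x y : F, f (x * y) - 2 * lam * ↑(x * y) = h x * h y := by
    refine forall₂_congr fun x y => ?_
    rw [Subfield.coe_mul, sub_eq_iff_eq_add, mul_assoc (2 * lam)]
  rw [hshift, map_mul_eq_mul_iff (φ := fun x : F => f x - 2 * lam * x)]
  constructor
  · rintro ⟨m, hh, hφ⟩
    exact ⟨m, map_mul m, hh, fun x => by linear_combination hφ x⟩
  · rintro ⟨m, hm, hh, hf⟩
    exact ⟨⟨m, hm⟩, hh, fun x => by simp [hf]⟩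
end

section
/- Let 𝔽 be a subfield of a field 𝕂 with char(𝕂) ≠ 2, and let λ ∈ 𝕂 be nonzero. If functions f, k : 𝔽 → 𝕂 satisfy f(xy) = x·k(y) + k(x)·y + λ²·k(x)k(y) for all x, y ∈ 𝔽, then either there exists γ ∈ 𝕂 with k(x) = γx and f(x) = (λ²γ² + 2γ)x for all x ∈ 𝔽, or there exist a multiplicative function m : 𝔽 → 𝕂 and a constant γ ∈ 𝕂 with k(x) = −(1/λ²)x + γ·m(x) and f(x) = −(1/λ²)x + γ²λ²·m(x) for all x ∈ 𝔽. -/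
/-!
Put `g x = x + λ² k x`. Comparing the equation at `(x, y)` with the one at `(xy, 1)` gives
`g x * g y = g (xy) * g 1`, so `g` is a constant multiple of a multiplicative function `m`
(and `g = 0` when `g 1 = 0`, since then `g x ^ 2 = 0`). Solving `g = g 1 * m` for `k`, and the
equation at `(x, 1)` for `f`, yields the second alternative with `γ = g 1 / λ²`.
-/

theorem exists_multiplicative_of_mul_eq_mul_apply_one {M K : Type*} [MulOneClass M]
    [CommGroupWithZero K] {g : M → K} (hg : ∀ x y, g x * g y = g (x * y) * g 1) :
    ∃ m : M → K, (∀ x y, m (x * y) = m x * m y) ∧ ∀ x, g x = g 1 * m x := by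
  by_cases h1 : g 1 = 0
  · refine ⟨0, fun _ _ => (mul_zero 0).symm, fun x => ?_⟩
    have hsq : g x * g x = 0 := by rw [hg, h1, mul_zero]
    rw [mul_self_eq_zero.mp hsq, h1, zero_mul]
  · refine ⟨fun x => g x / g 1, fun x y => ?_, fun x => (mul_div_cancel₀ _ h1).symm⟩
    rw [div_mul_div_comm, hg, mul_div_mul_right _ _ h1]

section

variable {K : Type*} [Field K] {F : Subfield K} {lam : K} {f k : F → K}

theorem shifted_mul_shifted
    (heq : ∀ x y : F, f (x * y) = x * k y + k x * y + lam ^ 2 * k x * k y) (x y : F) :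
    ((x : K) + lam ^ 2 * k x) * ((y : K) + lam ^ 2 * k y)
      = ((x * y : F) + lam ^ 2 * k (x * y)) * ((1 : F) + lam ^ 2 * k 1) := by
  have hxy := heq x y
  have hxy1 := heq (x * y) 1
  rw [mul_one] at hxy1
  push_cast at hxy hxy1 ⊢
  linear_combination lam ^ 2 * hxy1 - lam ^ 2 * hxy

theorem sq_mul_apply_eq_shifted
    (heq : ∀ x y : F, f (x * y) = x * k y + k x * y + lam ^ 2 * k x * k y) (x : F) :
    lam ^ 2 * f x = ((x : K) + lam ^ 2 * k x) * (1 + lam ^ 2 * k 1) - x := by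
  have hx1 := heq x 1
  rw [mul_one] at hx1
  push_cast at hx1
  linear_combination lam ^ 2 * hx1

end

theorem stmt_11_general (K : Type*) [Field K] (F : Subfield K)
    (lam : K) (hlam : lam ≠ 0) (f k : F → K)
    (heq : ∀ x y : F, f (x * y) = x * k y + k x * y + lam ^ 2 * k x * k y) :
    (∃ γ : K, (∀ x : F, k x = γ * x) ∧
        ∀ x : F, f x = (lam ^ 2 * γ ^ 2 + 2 * γ) * x) ∨
      (∃ m : F → K, (∀ x y : F, m (x * y) = m x * m y) ∧
        ∃ γ : K, (∀ x : F, k x = -(1 / lam ^ 2) * x + γ * m x) ∧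
          ∀ x : F, f x = -(1 / lam ^ 2) * x + γ ^ 2 * lam ^ 2 * m x) := by
  right
  obtain ⟨m, hm, hshifted⟩ :=
    exists_multiplicative_of_mul_eq_mul_apply_one (shifted_mul_shifted heq)
  simp only [Subfield.coe_one] at hshifted
  refine ⟨m, hm, (1 + lam ^ 2 * k 1) / lam ^ 2, fun x => ?_, fun x => ?_⟩
  · field_simp
    linear_combination hshifted x
  · have hf := sq_mul_apply_eq_shifted heq x
    rw [hshifted x] at hf
    field_simp
    linear_combination hf

theorem stmt_11 (K : Type*) [Field K] (F : Subfield K) (h2 : (2 : K) ≠ 0)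
    (lam : K) (hlam : lam ≠ 0) (f k : F → K)
    (heq : ∀ x y : F, f (x * y) = x * k y + k x * y + lam ^ 2 * k x * k y) :
    (∃ γ : K, (∀ x : F, k x = γ * x) ∧
        ∀ x : F, f x = (lam ^ 2 * γ ^ 2 + 2 * γ) * x) ∨
      (∃ m : F → K, (∀ x y : F, m (x * y) = m x * m y) ∧
        ∃ γ : K, (∀ x : F, k x = -(1 / lam ^ 2) * x + γ * m x) ∧
          ∀ x : F, f x = -(1 / lam ^ 2) * x + γ ^ 2 * lam ^ 2 * m x) :=
  stmt_11_general K F lam hlam f k heq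
end

section
/- Let 𝔽 be a subfield of a field 𝕂 with char(𝕂) ≠ 2. Given a multiplicative function m : 𝔽 → 𝕂, a logarithmic function l : 𝔽× → 𝕂, and constants β, γ ∈ 𝕂, define h(x) = βx + (1−β)m(x) and k(x) = (γl(x) + β − β²)x + (β² − β)m(x) for nonzero x. Then h(xy) + k(xy) = h(x)h(y) + x·k(y) + k(x)·y for all nonzero x, y ∈ 𝔽. -/
theorem stmt_13_general (K : Type*) [Field K] (F : Subfield K)
    (m : F → K) (hm : ∀ x y : F, m (x * y) = m x * m y)
    (l : F → K) (hl : ∀ x y : F, x ≠ 0 → y ≠ 0 → l (x * y) = l x + l y)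
    (β γ : K) (h k : F → K)
    (hh : ∀ x : F, x ≠ 0 → h x = β * x + (1 - β) * m x)
    (hk : ∀ x : F, x ≠ 0 → k x = (γ * l x + β - β ^ 2) * x + (β ^ 2 - β) * m x) :
    ∀ x y : F, x ≠ 0 → y ≠ 0 →
      h (x * y) + k (x * y) = h x * h y + x * k y + k x * y := by
  intro x y hx hy
  have hxy : x * y ≠ 0 := mul_ne_zero hx hy
  rw [hh _ hxy, hk _ hxy, hh x hx, hh y hy, hk x hx, hk y hy, hm, hl x y hx hy,
    Subfield.coe_mul]
  ring

theorem stmt_13 (K : Type*) [Field K] (F : Subfield K) (h2 : (2 : K) ≠ 0)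
    (m : F → K) (hm : ∀ x y : F, m (x * y) = m x * m y)
    (l : F → K) (hl : ∀ x y : F, x ≠ 0 → y ≠ 0 → l (x * y) = l x + l y)
    (β γ : K) (h k : F → K)
    (hh : ∀ x : F, x ≠ 0 → h x = β * x + (1 - β) * m x)
    (hk : ∀ x : F, x ≠ 0 → k x = (γ * l x + β - β ^ 2) * x + (β ^ 2 - β) * m x) :
    ∀ x y : F, x ≠ 0 → y ≠ 0 →
      h (x * y) + k (x * y) = h x * h y + x * k y + k x * y :=
  stmt_13_general K F m hm l hl β γ h k hh hk
end

section
/- Let 𝔽 be a field and 𝕂 a field containing 𝔽, and let λ, μ ∈ 𝕂 be not both zero with λ ≠ 0 and μ ≠ 0. If a function f : 𝔽 → 𝕂 satisfies λ[f(xy) − f(x)y − x·f(y)] + μ[f(xy) − f(x)f(y)] = 0 for all x, y ∈ 𝔽, then either f is identically zero or f(x) = ((μ−λ)/μ)·x for all x ∈ 𝔽. -/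
/-!
Putting `y = 1` in the equation gives `μ (1 - f 1) f x = λ f 1 x` for every `x`, and then `x = 1`
gives `f 1 = 0` or `μ (1 - f 1) = λ`. In the first case `μ f x = 0`, so `f = 0`; in the second
`λ f x = λ f 1 x`, so `f` is multiplication by `f 1 = (μ - λ) / μ`.
-/

section Alien

variable {K M : Type*} [Field K] [MulOneClass M] (ι : M →* K) {lam mu : K} {f : M → K}

theorem mul_one_sub_apply_one_mul_eq
    (heq : ∀ x y, lam * (f (x * y) - f x * ι y - ι x * f y) + mu * (f (x * y) - f x * f y) = 0)
    (x : M) : mu * (1 - f 1) * f x = lam * f 1 * ι x := by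
  have h := heq x 1
  rw [mul_one, map_one] at h
  linear_combination h

theorem eq_zero_or_eq_mul_of_leibniz_add_mul_eq_zero (hlam : lam ≠ 0) (hmu : mu ≠ 0)
    (heq : ∀ x y, lam * (f (x * y) - f x * ι y - ι x * f y) + mu * (f (x * y) - f x * f y) = 0) :
    (∀ x, f x = 0) ∨ ∀ x, f x = (mu - lam) / mu * ι x := by
  have key := mul_one_sub_apply_one_mul_eq ι heq
  have hone : f 1 * (mu * (1 - f 1) - lam) = 0 := by
    linear_combination (by simpa using key 1 : mu * (1 - f 1) * f 1 = lam * f 1)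
  rcases mul_eq_zero.mp hone with hf1 | hc
  · left
    intro x
    have h := key x
    rw [hf1, sub_zero, mul_one, mul_zero, zero_mul] at h
    exact (mul_eq_zero.mp h).resolve_left hmu
  · right
    have hf1 : f 1 = (mu - lam) / mu := by
      field_simp
      linear_combination -hc
    intro x
    rw [← hf1]
    apply mul_left_cancel₀ hlam
    linear_combination key x - f x * hc

end Alien

theorem stmt_14 (K : Type*) [Field K] (F : Subfield K) (lam mu : K)
    (hlam : lam ≠ 0) (hmu : mu ≠ 0) (f : F → K)
    (heq : ∀ x y : F,
      lam * (f (x * y) - f x * y - x * f y) + mu * (f (x * y) - f x * f y) = 0) :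
    (∀ x : F, f x = 0) ∨ ∀ x : F, f x = ((mu - lam) / mu) * x :=
  eq_zero_or_eq_mul_of_leibniz_add_mul_eq_zero (F.subtype : F →* K) hlam hmu heq
end

section
/- Let P be a subring of a ring Q with no zero divisors, and suppose f : P → Q satisfies both f(xy) = f(x)f(y) and f(xy) = f(x)y + x·f(y) for all x, y ∈ P. If there exists y* ∈ P with f(y*) ≠ y*, then f is identically zero. -/
/-!
Combining the two rules gives `f x * (f y - y) = x * f y`. Applying this identity to `x * z`
and expanding `f (x * z) = f x * f z` yields `(f x - x) * z * f y = 0` for all `x, z, y`;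
taking `x = z = y*`, both `f y* - y*` and `y*` are nonzero, so `f y = 0`.
-/

section

variable {Q S : Type*} [NonUnitalRing Q] [SetLike S Q] [MulMemClass S Q] {P : S} {f : P → Q}

theorem mul_sub_eq_of_mul_of_leibniz (hmul : ∀ x y : P, f (x * y) = f x * f y)
    (hleib : ∀ x y : P, f (x * y) = f x * y + x * f y) (x y : P) :
    f x * (f y - y) = x * f y := by
  rw [mul_sub, ← hmul, hleib, add_sub_cancel_left]

theorem sub_mul_mul_eq_zero_of_mul_of_leibniz (hmul : ∀ x y : P, f (x * y) = f x * f y)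
    (hleib : ∀ x y : P, f (x * y) = f x * y + x * f y) (x z y : P) :
    (f x - x) * z * f y = 0 := by
  have h := mul_sub_eq_of_mul_of_leibniz hmul hleib (x * z) y
  rw [hmul, mul_assoc, mul_sub_eq_of_mul_of_leibniz hmul hleib z y, MulMemClass.coe_mul,
    ← mul_assoc] at h
  rw [sub_mul, sub_mul, h, sub_self]

theorem coe_ne_zero_of_apply_ne_of_mul_of_leibniz [NoZeroDivisors Q]
    (hmul : ∀ x y : P, f (x * y) = f x * f y)
    (hleib : ∀ x y : P, f (x * y) = f x * y + x * f y) {y : P} (hy : f y ≠ y) :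
    (y : Q) ≠ 0 := by
  intro h0
  have h := mul_sub_eq_of_mul_of_leibniz hmul hleib y y
  rw [h0, sub_zero, zero_mul, mul_self_eq_zero] at h
  exact hy (h.trans h0.symm)

end

theorem stmt_16 (Q : Type*) [Ring Q] [NoZeroDivisors Q] (P : Subring Q) (f : P → Q)
    (hmul : ∀ x y : P, f (x * y) = f x * f y)
    (hleib : ∀ x y : P, f (x * y) = f x * y + x * f y)
    (hy : ∃ y : P, f y ≠ y) :
    ∀ x : P, f x = 0 := by
  obtain ⟨y, hy⟩ := hy
  intro x
  have h := sub_mul_mul_eq_zero_of_mul_of_leibniz hmul hleib y y x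
  exact (mul_eq_zero.1 h).resolve_left
    (mul_ne_zero (sub_ne_zero.2 hy) (coe_ne_zero_of_apply_ne_of_mul_of_leibniz hmul hleib hy))
end
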